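/- Let K be a semiring and (Σ,M) an OP alphabet. Every OPL step function S:(Σ,M)^+→K is strictly regular, i.e., recognized by a restricted weighted OPA over (Σ,M) and K. -/

import Mathlib

namespace WOP

/-- Precedence relations: yields precedence, equal in precedence, takes precedence. -/
inductive PrecRel where
  | lt | eq | gt
deriving DecidableEq

/-- An operator precedence matrix on `Σ ∪ {#}`, where `none` encodes `#`.
It assigns at most one precedence relation to each ordered pair, with
`# ⋖ a` and `a ⋗ #` for every letter `a`. -/
structure OPM (A : Type) where
  rel : Option A → Option A → Option PrecRel
  hash_lt : ∀ a : A, rel none (some a) = some .lt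
  hash_gt : ∀ a : A, rel (some a) none = some .gt

variable {A B K : Type}

/-- The letter of `#w#` at position `i` (positions `0` and `> |w|` carry `#`, i.e. `none`). -/
def letterAt (w : List A) (i : ℕ) : Option A :=
  if i = 0 then none else w[i - 1]?

section ChainRel

variable (M : OPM A) (L : ℕ → Option A)

mutual
  /-- `ChainMid M L k j`: there are `k = k_s < ... < k_m = j` with
  `L k_s ≐ L k_{s+1} ≐ ... ≐ L k_{m-1} ⋗ L k_m` and the gap condition between
  consecutive elements. -/
  inductive ChainMid : ℕ → ℕ → Prop where
    | last {k j : ℕ} : M.rel (L k) (L j) = some .gt → ChainGap k j → ChainMid k j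
    | step {k k' j : ℕ} : M.rel (L k) (L k') = some .eq → ChainGap k k' →
        ChainMid k' j → ChainMid k j

  /-- The gap condition between consecutive elements of a chain:
  adjacent positions or a chain. -/
  inductive ChainGap : ℕ → ℕ → Prop where
    | adj (k : ℕ) : ChainGap k (k + 1)
    | chain {k k' : ℕ} : Chain k k' → ChainGap k k'

  /-- The chain relation `i ⤳ j`: there are positions `i = k_1 < ... < k_m = j` with
  `L k_1 ⋖ L k_2 ≐ ... ≐ L k_{m-1} ⋗ L k_m` such that consecutive `k`'s are adjacent
  or themselves related by `⤳`. -/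
  inductive Chain : ℕ → ℕ → Prop where
    | mk {i k j : ℕ} : M.rel (L i) (L k) = some .lt → ChainGap i k → ChainMid k j →
        Chain i j
end

end ChainRel

/-- `(Σ,M)^+`: the set of nonempty words compatible with `M`, i.e. `0 ⤳ |w|+1` in `#w#`. -/
def OPWords (M : OPM A) : Set (List A) :=
  {w | w ≠ [] ∧ Chain M (letterAt w) 0 (w.length + 1)}

/-- An (unweighted) operator precedence automaton over the alphabet `A`. -/
structure OPA (A : Type) where
  Q : Type
  fin : Fintype Q
  I : Set Q
  F : Set Q
  δpush : Set (Q × A × Q)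
  δshift : Set (Q × A × Q)
  δpop : Set (Q × Q × Q)

/-- A weighted operator precedence automaton over the alphabet `A` and weights in `K`. -/
structure WOPA (A K : Type) extends OPA A where
  wtpush : Q × A × Q → K
  wtshift : Q × A × Q → K
  wtpop : Q × Q × Q → K

/-- A configuration: a stack of (symbol, state) pairs, a current state,
and the remaining input. -/
structure Config (A Q : Type) where
  stack : List (A × Q)
  state : Q
  input : List A

/-- The moves (transitions) an OPA may take. -/
inductive Move (A Q : Type) where
  | push (q : Q) (b : A) (r : Q)
  | shift (q : Q) (b : A) (r : Q)
  | pop (q p r : Q)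

/-- The topmost stack symbol (`none` = `#` for the empty stack). -/
def topSym {Q : Type} (st : List (A × Q)) : Option A := st.head?.map Prod.fst

/-- One step of an OPA on an OP alphabet `(A, M)`. -/
inductive Exec (M : OPM A) (T : OPA A) : Config A T.Q → Move A T.Q → Config A T.Q → Prop where
  | push {st : List (A × T.Q)} {q r : T.Q} {b : A} {x : List A} :
      M.rel (topSym st) (some b) = some .lt → (q, b, r) ∈ T.δpush →
      Exec M T ⟨st, q, b :: x⟩ (.push q b r) ⟨(b, q) :: st, r, x⟩
  | shift {st : List (A × T.Q)} {p q r : T.Q} {a b : A} {x : List A} :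
      M.rel (some a) (some b) = some .eq → (q, b, r) ∈ T.δshift →
      Exec M T ⟨(a, p) :: st, q, b :: x⟩ (.shift q b r) ⟨(b, p) :: st, r, x⟩
  | pop {st : List (A × T.Q)} {p q r : T.Q} {a : A} {x : List A} :
      M.rel (some a) x.head? = some .gt → (q, p, r) ∈ T.δpop →
      Exec M T ⟨(a, p) :: st, q, x⟩ (.pop q p r) ⟨st, r, x⟩

/-- Execution of a sequence of moves. -/
inductive ExecList (M : OPM A) (T : OPA A) :
    Config A T.Q → List (Move A T.Q) → Config A T.Q → Prop where
  | nil (c : Config A T.Q) : ExecList M T c [] c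
  | cons {c c' c'' : Config A T.Q} {m : Move A T.Q} {ms : List (Move A T.Q)} :
      Exec M T c m c' → ExecList M T c' ms c'' → ExecList M T c (m :: ms) c''

/-- The weight of a move of a weighted OPA. -/
def moveWt [Semiring K] (W : WOPA A K) : Move A W.Q → K
  | .push q b r => W.wtpush (q, b, r)
  | .shift q b r => W.wtshift (q, b, r)
  | .pop q p r => W.wtpop (q, p, r)

/-- The accepting runs of an OPA on `w`: an initial state, a sequence of moves from the
initial configuration (empty stack, whole input) to a final configuration
(empty stack, input read), and the final state reached. -/
def AccRuns (M : OPM A) (T : OPA A) (w : List A) : Set (T.Q × List (Move A T.Q) × T.Q) :=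
  {ρ | ρ.1 ∈ T.I ∧ ρ.2.2 ∈ T.F ∧ ExecList M T ⟨[], ρ.1, w⟩ ρ.2.1 ⟨[], ρ.2.2, []⟩}

/-- The behavior `⟦W⟧(w)`: the sum over all accepting runs of `W` on `w` of the product
(in order) of the weights of the moves of the run. -/
noncomputable def behavior [Semiring K] (M : OPM A) (W : WOPA A K) (w : List A) : K :=
  ∑ᶠ ρ ∈ AccRuns M W.toOPA w, (ρ.2.1.map (moveWt W)).prod

/-- A weighted OPA is restricted (an rwOPA) if all pop weights are `1`. -/
def Restricted [Semiring K] (W : WOPA A K) : Prop := ∀ t ∈ W.δpop, W.wtpop t = 1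

/-- A series `S : (Σ,M)^+ → K` is regular if it is the behavior of some wOPA. -/
def Regular [Semiring K] (M : OPM A) (S : List A → K) : Prop :=
  ∃ W : WOPA A K, ∀ w ∈ OPWords M, S w = behavior M W w

/-- A series is strictly regular if it is the behavior of some restricted wOPA. -/
def StrictlyRegular [Semiring K] (M : OPM A) (S : List A → K) : Prop :=
  ∃ W : WOPA A K, Restricted W ∧ ∀ w ∈ OPWords M, S w = behavior M W w

/-- Unweighted acceptance. -/
def Accepts (M : OPM A) (T : OPA A) (w : List A) : Prop :=
  ∃ qI ms qF, qI ∈ T.I ∧ qF ∈ T.F ∧ ExecList M T ⟨[], qI, w⟩ ms ⟨[], qF, []⟩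

/-- A language `L ⊆ (Σ,M)^+` is an operator precedence language if it is the set of
compatible words accepted by some OPA. -/
def IsOPL (M : OPM A) (L : Set (List A)) : Prop :=
  ∃ T : OPA A, L = {w | w ∈ OPWords M ∧ Accepts M T w}

/-- The intersection `S ∩ L` of a series with a language. -/
noncomputable def interSeries [Semiring K] (S : List A → K) (L : Set (List A))
    (w : List A) : K :=
  open Classical in if w ∈ L then S w else 0

/-- `h : Σ → Γ` is OPM-preserving: `a ⊙ b` iff `h(a) ⊙ h(b)` for every relation `⊙`. -/
def OPMPreserving (M : OPM A) (M' : OPM B) (h : A → B) : Prop :=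
  ∀ a b : A, M.rel (some a) (some b) = M'.rel (some (h a)) (some (h b))

/-- The image series `h(S)(v) = ∑_{w ∈ (Σ,M)^+, h(w) = v} S(w)`. -/
noncomputable def mapSeries [Semiring K] (M : OPM A) (h : A → B) (S : List A → K)
    (v : List B) : K :=
  ∑ᶠ w ∈ {w | w ∈ OPWords M ∧ w.map h = v}, S w

/-- The pullback OPM `h⁻¹(M)` along `h : Σ' → Σ`. -/
def pullOPM (M : OPM A) (h : B → A) : OPM B where
  rel o₁ o₂ := M.rel (o₁.map h) (o₂.map h)
  hash_lt b := M.hash_lt (h b)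
  hash_gt b := M.hash_gt (h b)

/-- The Nivat class `N(Σ,M,K)`: series obtained from a one-state restricted wOPA over a
pulled-back OP alphabet, intersected with an OPL, followed by the projection. -/
def NivatClass [Semiring K] (M : OPM A) (S : List A → K) : Prop :=
  ∃ (B : Type) (_ : Fintype B) (h : B → A) (W : WOPA B K) (L : Set (List B)),
    Restricted W ∧ (∃ q₀ : W.Q, ∀ q : W.Q, q = q₀) ∧ IsOPL (pullOPM M h) L ∧
    ∀ v ∈ OPWords M,
      S v = mapSeries (pullOPM M h) h (interSeries (behavior (pullOPM M h) W) L) v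

/-- An OPL step function: a finite sum `∑ kᵢ · 1_{Lᵢ}` with the `Lᵢ` OPLs forming a
partition of `(Σ,M)^+`. -/
def IsOPLStep [Semiring K] (M : OPM A) (S : List A → K) : Prop :=
  ∃ (n : ℕ) (k : Fin n → K) (L : Fin n → Set (List A)),
    (∀ i, IsOPL M (L i)) ∧ (∀ i j, i ≠ j → Disjoint (L i) (L j)) ∧
    (⋃ i, L i) = OPWords M ∧ ∀ i, ∀ w ∈ L i, S w = k i

/-!
The automata for the `Lᵢ` are determinized and run side by side. For each `Tᵢ` the
deterministic automaton keeps a summary: the set of pairs `(p, q)` where `p` is the state `Tᵢ`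
stored with the topmost stack symbol and `q` a state `Tᵢ` can be in with the same stack
contents. Push, shift and pop update summaries locally, and `Tᵢ` accepts iff the last summary
has a pair ending in a final state. An initial state also guesses an index `j`; the first move,
always a push, is charged `kⱼ` and every other move weighs `1`. Since the moves on a word are
dictated by the precedence matrix alone, each guess has exactly one run on `w` once some `Tᵢ`
accepts `w`, and that run accepts iff `w ∈ Lⱼ`. The `Lᵢ` partition `(Σ,M)^+`, so exactly one run
is accepting, and its weight is `S w`.
-/

def Move.prec {Q : Type} : Move A Q → PrecRel
  | .push .. => .lt
  | .shift .. => .eq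
  | .pop .. => .gt

def Config.SameSymbols {Q Q' : Type} (c : Config A Q) (d : Config A Q') : Prop :=
  c.stack.map Prod.fst = d.stack.map Prod.fst ∧ c.input = d.input

theorem Config.SameSymbols.symm {Q Q' : Type} {c : Config A Q} {d : Config A Q'}
    (h : c.SameSymbols d) : d.SameSymbols c :=
  ⟨h.1.symm, h.2.symm⟩

section Shape

variable {M : OPM A} {T₁ T₂ : OPA A}

theorem topSym_eq_head?_map {Q : Type} (st : List (A × Q)) :
    topSym st = (st.map Prod.fst).head? := by
  simp [topSym, List.head?_map]

theorem Exec.rel_eq {c c' : Config A T₁.Q} {m : Move A T₁.Q} (h : Exec M T₁ c m c') :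
    M.rel (topSym c.stack) c.input.head? = some m.prec := by
  cases h <;> assumption

theorem Exec.not_sameSymbols_final {c c' : Config A T₁.Q}
    {m : Move A T₁.Q} {Q : Type} {q : Q} (h : Exec M T₁ c m c') :
    ¬ c.SameSymbols (⟨[], q, []⟩ : Config A Q) := by
  rintro ⟨hst, hin⟩
  cases h <;> simp_all

theorem Exec.prec_eq {c₁ c₁' : Config A T₁.Q} {m₁ : Move A T₁.Q}
    {c₂ c₂' : Config A T₂.Q} {m₂ : Move A T₂.Q}
    (h₁ : Exec M T₁ c₁ m₁ c₁') (h₂ : Exec M T₂ c₂ m₂ c₂') (hc : c₁.SameSymbols c₂) :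
    m₁.prec = m₂.prec := by
  have hrel := h₁.rel_eq
  rw [topSym_eq_head?_map, hc.1, hc.2, ← topSym_eq_head?_map, h₂.rel_eq] at hrel
  exact (Option.some.inj hrel).symm

end Shape

def OPA.ofFun {Q : Type} [Fintype Q] (I F : Set Q) (push shift : A → Q → Q)
    (pop : Q → Q → Q) : OPA A where
  Q := Q
  fin := ‹_›
  I := I
  F := F
  δpush := {t | t.2.2 = push t.2.1 t.1}
  δshift := {t | t.2.2 = shift t.2.1 t.1}
  δpop := {t | t.2.2 = pop t.1 t.2.1}

namespace OPA.ofFun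

variable {Q : Type} [Fintype Q] {I F : Set Q} {push shift : A → Q → Q} {pop : Q → Q → Q}
  {M : OPM A}

local notation "D" => OPA.ofFun I F push shift pop
local notation "DQ" => OPA.Q (OPA.ofFun (A := A) I F push shift pop)

@[simp] theorem mem_δpush {q r : DQ} {b : A} : (q, b, r) ∈ (D).δpush ↔ r = push b q := Iff.rfl

@[simp] theorem mem_δshift {q r : DQ} {b : A} : (q, b, r) ∈ (D).δshift ↔ r = shift b q := Iff.rfl

@[simp] theorem mem_δpop {q p r : DQ} : (q, p, r) ∈ (D).δpop ↔ r = pop q p := Iff.rfl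

theorem exec_unique {d d₁ d₂ : Config A DQ} {m₁ m₂ : Move A DQ}
    (h₁ : Exec M D d m₁ d₁) (h₂ : Exec M D d m₂ d₂) : m₁ = m₂ ∧ d₁ = d₂ := by
  have hprec := h₁.prec_eq h₂ ⟨rfl, rfl⟩
  cases h₁ <;> cases h₂ <;> simp_all [Move.prec]

theorem execList_unique {d : Config A DQ} {ms₁ ms₂ : List (Move A DQ)} {q₁ q₂ : Q}
    (h₁ : ExecList M D d ms₁ ⟨[], q₁, []⟩) (h₂ : ExecList M D d ms₂ ⟨[], q₂, []⟩) :
    ms₁ = ms₂ ∧ q₁ = q₂ := by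
  generalize he : (⟨[], q₁, []⟩ : Config A DQ) = e at h₁
  induction h₁ generalizing ms₂ with
  | nil =>
    subst he
    cases h₂ with
    | nil => exact ⟨rfl, rfl⟩
    | cons hx _ => exact (hx.not_sameSymbols_final ⟨rfl, rfl⟩).elim
  | cons hx _ ih =>
    cases h₂ with
    | nil => subst he; exact (hx.not_sameSymbols_final ⟨rfl, rfl⟩).elim
    | cons hx₂ hrest₂ =>
      obtain ⟨rfl, rfl⟩ := exec_unique hx hx₂
      obtain ⟨rfl, rfl⟩ := ih hrest₂ he
      exact ⟨rfl, rfl⟩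

theorem exists_exec {T : OPA A} {c c' : Config A T.Q} {m : Move A T.Q} (h : Exec M T c m c')
    (d : Config A DQ) (hcd : c.SameSymbols d) :
    ∃ m' d', Exec M D d m' d' ∧ c'.SameSymbols d' := by
  obtain ⟨ds, σ, di⟩ := d
  obtain ⟨hst, hin⟩ := hcd
  cases h with
  | @push st q r b x hrel =>
    subst hin
    refine ⟨.push σ b (push b σ), ⟨(b, σ) :: ds, push b σ, x⟩, .push ?_ rfl, ?_, rfl⟩
    · rwa [topSym_eq_head?_map, ← hst, ← topSym_eq_head?_map]
    · simpa using hst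
  | @shift st p q r a b x hrel =>
    subst hin
    cases ds with
    | nil => simp at hst
    | cons top ds =>
      obtain ⟨a', σp⟩ := top
      simp only [List.map_cons, List.cons.injEq] at hst
      obtain ⟨rfl, hst⟩ := hst
      exact ⟨.shift σ b (shift b σ), ⟨(b, σp) :: ds, shift b σ, x⟩, .shift hrel rfl,
        by simpa using hst, rfl⟩
  | @pop st p q r a x hrel =>
    subst hin
    cases ds with
    | nil => simp at hst
    | cons top ds =>
      obtain ⟨a', σp⟩ := top
      simp only [List.map_cons, List.cons.injEq] at hst
      obtain ⟨rfl, hst⟩ := hst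
      exact ⟨.pop σ σp (pop σ σp), ⟨ds, pop σ σp, x⟩, .pop hrel rfl, hst, rfl⟩

theorem exists_execList {T : OPA A} {c : Config A T.Q} {ms : List (Move A T.Q)} {q : T.Q}
    (h : ExecList M T c ms ⟨[], q, []⟩) (d : Config A DQ) (hcd : c.SameSymbols d) :
    ∃ ms' q', ExecList M D d ms' ⟨[], q', []⟩ := by
  generalize he : (⟨[], q, []⟩ : Config A T.Q) = e at h
  induction h generalizing d with
  | nil =>
    subst he
    obtain ⟨ds, σ, di⟩ := d
    obtain ⟨hst, hin⟩ := hcd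
    simp only [List.map_nil] at hst hin
    obtain rfl := List.map_eq_nil_iff.mp hst.symm
    subst hin
    exact ⟨[], σ, .nil _⟩
  | cons hx _ ih =>
    obtain ⟨m', d', hd, hcd'⟩ := exists_exec hx d hcd
    obtain ⟨ms', q', hrest⟩ := ih d' hcd' he
    exact ⟨m' :: ms', q', .cons hd hrest⟩

end OPA.ofFun

namespace OPA

section Summaries

variable (T : OPA A)

def pushSummary (b : A) (P : Set (T.Q × T.Q)) : Set (T.Q × T.Q) :=
  {x | ∃ p, (p, x.1) ∈ P ∧ (x.1, b, x.2) ∈ T.δpush}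

def shiftSummary (b : A) (P : Set (T.Q × T.Q)) : Set (T.Q × T.Q) :=
  {x | ∃ q, (x.1, q) ∈ P ∧ (q, b, x.2) ∈ T.δshift}

def popSummary (Pp P : Set (T.Q × T.Q)) : Set (T.Q × T.Q) :=
  {x | ∃ p q, (x.1, p) ∈ Pp ∧ (p, q) ∈ P ∧ (q, p, x.2) ∈ T.δpop}

def initSummary : Set (T.Q × T.Q) := {x | x.1 = x.2 ∧ x.1 ∈ T.I}

def AcceptingSummary (P : Set (T.Q × T.Q)) : Prop := ∃ x ∈ P, x.2 ∈ T.F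

structure TracksSummaries (D : OPA A) (π : D.Q → Set (T.Q × T.Q)) : Prop where
  push : ∀ q b r, (q, b, r) ∈ D.δpush → π r = T.pushSummary b (π q)
  shift : ∀ q b r, (q, b, r) ∈ D.δshift → π r = T.shiftSummary b (π q)
  pop : ∀ q p r, (q, p, r) ∈ D.δpop → π r = T.popSummary (π p) (π q)

-- `a` is the state stored at the top of `st`, or `q₀` if `st` is empty
inductive StackLink {S : Type} (π : S → Set (T.Q × T.Q)) (q₀ : T.Q) :
    T.Q → List (A × T.Q) → List (A × S) → Prop
  | nil : StackLink π q₀ q₀ [] []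
  | cons {a p : T.Q} {b : A} {σ : S} {st : List (A × T.Q)} {st' : List (A × S)} :
      StackLink π q₀ a st st' → (a, p) ∈ π σ → StackLink π q₀ p ((b, p) :: st) ((b, σ) :: st')

def Linked {S : Type} (π : S → Set (T.Q × T.Q)) (q₀ : T.Q) (c : Config A T.Q)
    (d : Config A S) : Prop :=
  c.input = d.input ∧ ∃ a, T.StackLink π q₀ a c.stack d.stack ∧ (a, c.state) ∈ π d.state

variable {T} {S : Type} {π : S → Set (T.Q × T.Q)} {q₀ : T.Q}

theorem StackLink.symbols {a : T.Q} {st : List (A × T.Q)} {st' : List (A × S)}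
    (h : T.StackLink π q₀ a st st') : st.map Prod.fst = st'.map Prod.fst := by
  induction h <;> simp [*]

theorem Linked.sameSymbols {c : Config A T.Q} {d : Config A S} (h : T.Linked π q₀ c d) :
    c.SameSymbols d :=
  ⟨h.2.choose_spec.1.symbols, h.1⟩

end Summaries

end OPA

namespace OPA.TracksSummaries

variable {M : OPM A} {T D : OPA A} {π : D.Q → Set (T.Q × T.Q)} {q₀ : T.Q}

theorem linked_exec (hD : T.TracksSummaries D π) {c c' : Config A T.Q} {d d' : Config A D.Q}
    {m : Move A T.Q} {m' : Move A D.Q} (hcd : T.Linked π q₀ c d) (hc : Exec M T c m c')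
    (hd : Exec M D d m' d') : T.Linked π q₀ c' d' := by
  have hprec := hc.prec_eq hd hcd.sameSymbols
  obtain ⟨hin, a, hlink, hpair⟩ := hcd
  cases hc with
  | push _ hδ =>
    cases hd with
    | push _ hδ' =>
      simp only [List.cons.injEq] at hin
      obtain ⟨rfl, rfl⟩ := hin
      exact ⟨rfl, _, .cons hlink hpair, by rw [hD.push _ _ _ hδ']; exact ⟨a, hpair, hδ⟩⟩
    | shift | pop => simp [Move.prec] at hprec
  | shift _ hδ =>
    cases hd with
    | shift _ hδ' =>
      simp only [List.cons.injEq] at hin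
      obtain ⟨rfl, rfl⟩ := hin
      cases hlink with
      | cons hlink₀ hpair₀ =>
        exact ⟨rfl, _, .cons hlink₀ hpair₀,
          by rw [hD.shift _ _ _ hδ']; exact ⟨_, hpair, hδ⟩⟩
    | push | pop => simp [Move.prec] at hprec
  | pop _ hδ =>
    cases hd with
    | pop _ hδ' =>
      cases hlink with
      | cons hlink₀ hpair₀ =>
        exact ⟨hin, _, hlink₀, by rw [hD.pop _ _ _ hδ']; exact ⟨_, _, hpair₀, hpair, hδ⟩⟩
    | push | shift => simp [Move.prec] at hprec

theorem exists_linked_of_exec (hD : T.TracksSummaries D π) {c' : Config A T.Q}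
    {d d' : Config A D.Q} {m' : Move A D.Q} (hd : Exec M D d m' d')
    (hcd' : T.Linked π q₀ c' d') : ∃ c m, T.Linked π q₀ c d ∧ Exec M T c m c' := by
  obtain ⟨cs, cq, ci⟩ := c'
  obtain ⟨hin, a, hlink, hpair⟩ := hcd'
  subst hin
  cases hd with
  | push hrel hδ' =>
    rw [hD.push _ _ _ hδ'] at hpair
    obtain ⟨p, -, hδ⟩ := hpair
    cases hlink with
    | cons hlink₀ hpair₀ =>
      refine ⟨_, _, ⟨rfl, _, hlink₀, hpair₀⟩, .push ?_ hδ⟩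
      rwa [topSym_eq_head?_map, hlink₀.symbols, ← topSym_eq_head?_map]
  | shift hrel hδ' =>
    rw [hD.shift _ _ _ hδ'] at hpair
    obtain ⟨q, hq, hδ⟩ := hpair
    cases hlink with
    | cons hlink₀ hpair₀ =>
      exact ⟨_, _, ⟨rfl, _, .cons hlink₀ hpair₀, hq⟩, .shift hrel hδ⟩
  | pop hrel hδ' =>
    rw [hD.pop _ _ _ hδ'] at hpair
    obtain ⟨p, q, hp, hq, hδ⟩ := hpair
    exact ⟨⟨(_, p) :: cs, q, _⟩, _, ⟨rfl, _, .cons hlink hp, hq⟩, .pop hrel hδ⟩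

theorem linked_execList (hD : T.TracksSummaries D π) {c : Config A T.Q} {d : Config A D.Q}
    {ms : List (Move A T.Q)} {ms' : List (Move A D.Q)} {q : T.Q} {σ : D.Q}
    (hcd : T.Linked π q₀ c d) (hc : ExecList M T c ms ⟨[], q, []⟩)
    (hd : ExecList M D d ms' ⟨[], σ, []⟩) : T.Linked π q₀ ⟨[], q, []⟩ ⟨[], σ, []⟩ := by
  generalize he : (⟨[], q, []⟩ : Config A T.Q) = e at hc
  induction hc generalizing d ms' with
  | nil =>
    subst he
    cases hd with
    | nil => exact hcd
    | cons hx _ => exact (hx.not_sameSymbols_final hcd.sameSymbols.symm).elim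
  | cons hx _ ih =>
    cases hd with
    | nil => exact (hx.not_sameSymbols_final hcd.sameSymbols).elim
    | cons hx' hrest' => exact ih (hD.linked_exec hcd hx hx') hrest' he

theorem exists_linked_of_execList (hD : T.TracksSummaries D π) {c' : Config A T.Q}
    {d d' : Config A D.Q} {ms' : List (Move A D.Q)} (hd : ExecList M D d ms' d')
    (hcd' : T.Linked π q₀ c' d') : ∃ c ms, T.Linked π q₀ c d ∧ ExecList M T c ms c' := by
  induction hd with
  | nil => exact ⟨c', [], hcd', .nil _⟩
  | cons hx _ ih =>
    obtain ⟨c₁, ms, hcd₁, hrun⟩ := ih hcd'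
    obtain ⟨c, m, hcd, hstep⟩ := hD.exists_linked_of_exec hx hcd₁
    exact ⟨c, m :: ms, hcd, .cons hstep hrun⟩

theorem acceptingSummary_iff (hD : T.TracksSummaries D π) {w : List A} {σ σf : D.Q}
    {ms' : List (Move A D.Q)} (hσ : π σ = T.initSummary)
    (hrun : ExecList M D ⟨[], σ, w⟩ ms' ⟨[], σf, []⟩) :
    T.AcceptingSummary (π σf) ↔ Accepts M T w := by
  constructor
  · rintro ⟨⟨q₀, qf⟩, hpair, hqf⟩
    obtain ⟨⟨cs, q, ci⟩, ms, ⟨rfl, a, hlink, hini⟩, hc⟩ :=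
      hD.exists_linked_of_execList hrun (c' := ⟨[], qf, []⟩) ⟨rfl, q₀, .nil, hpair⟩
    cases hlink
    rw [hσ] at hini
    obtain ⟨hq : q₀ = q, hq₀⟩ := hini
    exact ⟨q, ms, qf, hq ▸ hq₀, hqf, hc⟩
  · rintro ⟨q, ms, qf, hq, hqf, hc⟩
    have hini : (q, q) ∈ π σ := by rw [hσ]; exact ⟨rfl, hq⟩
    obtain ⟨-, a, -, hpair⟩ := hD.linked_execList (q₀ := q) ⟨rfl, q, .nil, hini⟩ hc hrun
    exact ⟨(a, qf), hpair, hqf⟩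

end OPA.TracksSummaries

section StepAutomaton

variable {n : ℕ}

-- a flag for "no move made yet", the guessed index, and one summary per automaton
abbrev StepState (T : Fin n → OPA A) : Type :=
  Bool × Fin n × ∀ i, Set ((T i).Q × (T i).Q)

instance (T : Fin n → OPA A) : Fintype (StepState T) :=
  letI : ∀ i, Fintype (T i).Q := fun i => (T i).fin
  inferInstance

def StepState.ini (T : Fin n → OPA A) (j : Fin n) : StepState T :=
  (true, j, fun i => (T i).initSummary)

def stepOPA (T : Fin n → OPA A) : OPA A :=
  OPA.ofFun (Q := StepState T) (Set.range (StepState.ini T))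
    {σ | (T σ.2.1).AcceptingSummary (σ.2.2 σ.2.1)}
    (fun b σ => (false, σ.2.1, fun i => (T i).pushSummary b (σ.2.2 i)))
    (fun b σ => (false, σ.2.1, fun i => (T i).shiftSummary b (σ.2.2 i)))
    (fun σ σp => (false, σ.2.1, fun i => (T i).popSummary (σp.2.2 i) (σ.2.2 i)))

variable {T : Fin n → OPA A} {M : OPM A}

theorem stepOPA_tracksSummaries (i : Fin n) :
    (T i).TracksSummaries (stepOPA T) (fun σ => σ.2.2 i) where
  push _ _ _ h := by rw [OPA.ofFun.mem_δpush.mp h]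
  shift _ _ _ h := by rw [OPA.ofFun.mem_δshift.mp h]
  pop _ _ _ h := by rw [OPA.ofFun.mem_δpop.mp h]

theorem stepOPA_exec_state {d d' : Config A (stepOPA T).Q} {m : Move A (stepOPA T).Q}
    (h : Exec M (stepOPA T) d m d') : d'.state.1 = false ∧ d'.state.2.1 = d.state.2.1 := by
  cases h with
  | push _ hδ => rw [OPA.ofFun.mem_δpush.mp hδ]; exact ⟨rfl, rfl⟩
  | shift _ hδ => rw [OPA.ofFun.mem_δshift.mp hδ]; exact ⟨rfl, rfl⟩
  | pop _ hδ => rw [OPA.ofFun.mem_δpop.mp hδ]; exact ⟨rfl, rfl⟩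

theorem stepOPA_execList_index {d d' : Config A (stepOPA T).Q}
    {ms : List (Move A (stepOPA T).Q)} (h : ExecList M (stepOPA T) d ms d') :
    d'.state.2.1 = d.state.2.1 := by
  induction h with
  | nil => rfl
  | cons hx _ ih => rw [ih, (stepOPA_exec_state hx).2]

theorem stepOPA_final_iff {w : List A} {j : Fin n} {σf : StepState T}
    {ms : List (Move A (stepOPA T).Q)}
    (hrun : ExecList M (stepOPA T) ⟨[], StepState.ini T j, w⟩ ms ⟨[], σf, []⟩) :
    σf ∈ (stepOPA T).F ↔ Accepts M (T j) w := by
  have hj : σf.2.1 = j := stepOPA_execList_index hrun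
  subst hj
  exact (stepOPA_tracksSummaries σf.2.1).acceptingSummary_iff rfl hrun

end StepAutomaton

section StepWeighted

variable {K : Type} [Semiring K] {n : ℕ}

abbrev stepWOPA (T : Fin n → OPA A) (k : Fin n → K) : WOPA A K where
  toOPA := stepOPA T
  wtpush t := if t.1.1 then k t.1.2.1 else 1
  wtshift _ := 1
  wtpop _ := 1

variable {T : Fin n → OPA A} {k : Fin n → K} {M : OPM A}

theorem stepWOPA_weight_eq_one_of_not_fresh {d d' : Config A (stepOPA T).Q}
    {ms : List (Move A (stepOPA T).Q)} (h : ExecList M (stepOPA T) d ms d')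
    (hd : d.state.1 = false) : (ms.map (moveWt (stepWOPA T k))).prod = 1 := by
  induction h with
  | nil => rfl
  | @cons _ _ _ m _ hx _ ih =>
    have hm : moveWt (stepWOPA T k) m = 1 := by
      cases hx with
      | push => simp only at hd; simp [moveWt, hd]
      | shift | pop => rfl
    rw [List.map_cons, List.prod_cons, hm, one_mul, ih (stepOPA_exec_state hx).1]

theorem stepWOPA_weight_run {w : List A} {j : Fin n} {σf : StepState T}
    {ms : List (Move A (stepOPA T).Q)} (hw : w ≠ [])
    (hrun : ExecList M (stepOPA T) ⟨[], StepState.ini T j, w⟩ ms ⟨[], σf, []⟩) :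
    (ms.map (moveWt (stepWOPA T k))).prod = k j := by
  cases hrun with
  | nil => exact (hw rfl).elim
  | cons hx hrest =>
    have hfresh := (stepOPA_exec_state hx).1
    cases hx with
    | push =>
      rw [List.map_cons, List.prod_cons, stepWOPA_weight_eq_one_of_not_fresh hrest hfresh, mul_one]
      rfl

theorem behavior_stepWOPA (k : Fin n → K) {w : List A} (hw : w ≠ []) {i₀ : Fin n}
    (hacc : Accepts M (T i₀) w) (huniq : ∀ j, Accepts M (T j) w → j = i₀) :
    behavior M (stepWOPA T k) w = k i₀ := by
  have hruns : ∀ j, ∃ ms σf,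
      ExecList M (stepOPA T) ⟨[], StepState.ini T j, w⟩ ms ⟨[], σf, []⟩ := by
    obtain ⟨_, _, _, _, _, hrun⟩ := hacc
    exact fun j => OPA.ofFun.exists_execList hrun _ ⟨rfl, rfl⟩
  choose ms σf hrun using hruns
  have hAcc : AccRuns M (stepWOPA T k).toOPA w = {(StepState.ini T i₀, ms i₀, σf i₀)} := by
    refine Set.eq_singleton_iff_unique_mem.mpr
      ⟨⟨⟨i₀, rfl⟩, (stepOPA_final_iff (hrun i₀)).mpr hacc, hrun i₀⟩, ?_⟩
    rintro ⟨_, ms', σ'⟩ ⟨⟨j, rfl⟩, hF, hrun'⟩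
    obtain ⟨rfl, rfl⟩ := OPA.ofFun.execList_unique (hrun j) hrun'
    obtain rfl := huniq j ((stepOPA_final_iff (hrun j)).mp hF)
    rfl
  rw [behavior, hAcc]
  exact finsum_mem_singleton.trans (stepWOPA_weight_run hw (hrun i₀))

end StepWeighted

/-- Every OPL step function is strictly regular. -/
theorem step_strictlyRegular {A K : Type} [Fintype A] [Semiring K] (M : OPM A)
    (S : List A → K) (hS : IsOPLStep M S) : StrictlyRegular M S := by
  obtain ⟨n, k, L, hOPL, hdisj, hcover, hval⟩ := hS
  choose T hT using hOPL
  refine ⟨stepWOPA T k, fun _ _ => rfl, fun w hw => ?_⟩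
  have hmem : ∀ j, w ∈ L j ↔ Accepts M (T j) w := fun j => by
    rw [hT j]; exact and_iff_right hw
  obtain ⟨i₀, hi₀⟩ := Set.mem_iUnion.mp (hcover ▸ hw)
  rw [hval i₀ w hi₀, behavior_stepWOPA k hw.1 ((hmem i₀).mp hi₀)]
  intro j hj
  by_contra hne
  exact Set.disjoint_left.mp (hdisj j i₀ hne) ((hmem j).mpr hj) hi₀

end WOP
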